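/- Let Ω̂ ⊆ ℝ³ be a measurable set, let F : ℝ³ → ℝ³ be twice continuously differentiable, injective on Ω̂, with det(DF(x̂)) > 0 for all x̂ ∈ Ω̂, and let u, v : ℝ³ → ℝ³ be continuously differentiable. Define the covariant Piola pullbacks û(x̂) = (DF(x̂))ᵀ u(F(x̂)) and v̂(x̂) = (DF(x̂))ᵀ v(F(x̂)). Then ∫_{F(Ω̂)} ⟨(∇ × u)(x), (∇ × v)(x)⟩ dx = ∫_{Ω̂} (1 / det(DF(x̂))) ⟨DF(x̂) (∇ × û)(x̂), DF(x̂) (∇ × v̂)(x̂)⟩ dx̂, where ∇ × w denotes the curl of a vector field w : ℝ³ → ℝ³, ⟨·,·⟩ is the Euclidean inner product, and integration is with respect to Lebesgue measure. -/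

import Mathlib

/-!
The covariant Piola transform `û = DFᵀ (u ∘ F)` is the pullback `F^* ω` of the 1-form
`ω = ⟨u, ·⟩`, and `curl u` encodes the 2-form `dω`. Since `d` commutes with pullbacks,
`Dû - Dûᵀ = DFᵀ (Du - Duᵀ) DF`, and the cofactor identity `J · axial (Jᵀ A J) = det J · axial A`
turns this into `DF (curl û) = det DF · (curl u) ∘ F`. The change of variables formula, whose
Jacobian factor `det DF` equals `det DF² / det DF`, finishes the proof.
-/

open MeasureTheory

/-- Jacobian matrix of a map `F : ℝ³ → ℝ³` at a point. -/
noncomputable def jacobian3 (F : (Fin 3 → ℝ) → (Fin 3 → ℝ)) (x : Fin 3 → ℝ) :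
    Matrix (Fin 3) (Fin 3) ℝ :=
  Matrix.of fun i j => fderiv ℝ F x (Pi.single j 1) i

/-- Partial derivative of a scalar function in the j-th coordinate direction. -/
noncomputable def pderiv3 (g : (Fin 3 → ℝ) → ℝ) (j : Fin 3) (x : Fin 3 → ℝ) : ℝ :=
  fderiv ℝ g x (Pi.single j 1)

/-- Curl of a vector field in ℝ³:
∇ × v = (∂₂v₃ − ∂₃v₂, ∂₃v₁ − ∂₁v₃, ∂₁v₂ − ∂₂v₁). -/
noncomputable def curl3 (v : (Fin 3 → ℝ) → (Fin 3 → ℝ)) (x : Fin 3 → ℝ) : Fin 3 → ℝ :=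
  ![pderiv3 (fun y => v y 2) 1 x - pderiv3 (fun y => v y 1) 2 x,
    pderiv3 (fun y => v y 0) 2 x - pderiv3 (fun y => v y 2) 0 x,
    pderiv3 (fun y => v y 1) 0 x - pderiv3 (fun y => v y 0) 1 x]

open ContinuousAlternatingMap Matrix

/-- `skewAxial A` is the axial vector of `A - Aᵀ`, so that `curl w = skewAxial (Dw)`. -/
def skewAxial {R : Type*} [Ring R] (A : Matrix (Fin 3) (Fin 3) R) : Fin 3 → R :=
  ![A 2 1 - A 1 2, A 0 2 - A 2 0, A 1 0 - A 0 1]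

lemma skewAxial_congr {R : Type*} [Ring R] {A B : Matrix (Fin 3) (Fin 3) R}
    (h : A - Aᵀ = B - Bᵀ) : skewAxial A = skewAxial B := by
  have hentry (i j : Fin 3) : A i j - A j i = B i j - B j i := by
    simpa using congrFun (congrFun h i) j
  simp [skewAxial, hentry]

lemma mulVec_skewAxial_transpose_mul_mul {R : Type*} [CommRing R]
    (J A : Matrix (Fin 3) (Fin 3) R) :
    J *ᵥ skewAxial (Jᵀ * A * J) = J.det • skewAxial A := by
  ext i
  fin_cases i <;>
  · simp only [mulVec, dotProduct, Fin.zero_eta, Fin.mk_one, Fin.reduceFinMk, skewAxial,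
      mul_apply, transpose_apply, Fin.sum_univ_three, cons_val_zero, cons_val_one, cons_val,
      det_fin_three, Pi.smul_apply, smul_eq_mul]
    ring

section Jacobian

variable (F : (Fin 3 → ℝ) → Fin 3 → ℝ) (x : Fin 3 → ℝ)

lemma jacobian3_eq_toMatrix' :
    jacobian3 F x = LinearMap.toMatrix' (fderiv ℝ F x : (Fin 3 → ℝ) →ₗ[ℝ] Fin 3 → ℝ) := by
  ext i j
  simp [jacobian3, LinearMap.toMatrix'_apply]

lemma jacobian3_mulVec (v : Fin 3 → ℝ) : jacobian3 F x *ᵥ v = fderiv ℝ F x v := by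
  rw [jacobian3_eq_toMatrix', LinearMap.toMatrix'_mulVec]
  rfl

lemma det_jacobian3 : (jacobian3 F x).det = (fderiv ℝ F x).det := by
  rw [jacobian3_eq_toMatrix', LinearMap.det_toMatrix']

end Jacobian

lemma curl3_eq_skewAxial {w : (Fin 3 → ℝ) → Fin 3 → ℝ} {x : Fin 3 → ℝ}
    (hw : DifferentiableAt ℝ w x) : curl3 w x = skewAxial (jacobian3 w x) := by
  have hpartial (i j : Fin 3) : pderiv3 (fun y => w y i) j x = jacobian3 w x i j := by
    simp [pderiv3, jacobian3, fderiv_apply hw]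
  simp [curl3, skewAxial, hpartial]

noncomputable def dotForm {n : ℕ} : (Fin n → ℝ) →L[ℝ] (Fin n → ℝ) [⋀^Fin 1]→L[ℝ] ℝ :=
  (ofSubsingletonLIE (0 : Fin 1)).toContinuousLinearEquiv.toContinuousLinearMap ∘L
    (dotProductBilin ℝ ℝ).toContinuousBilinearMap

@[simp]
lemma dotForm_apply {n : ℕ} (v : Fin n → ℝ) (m : Fin 1 → Fin n → ℝ) :
    dotForm v m = v ⬝ᵥ m 0 :=
  rfl

lemma extDeriv_dotForm_comp_apply {n : ℕ} {w : (Fin n → ℝ) → Fin n → ℝ} {x : Fin n → ℝ}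
    (hw : DifferentiableAt ℝ w x) (a b : Fin n → ℝ) :
    extDeriv (fun y => dotForm (w y)) x ![a, b] =
      fderiv ℝ w x a ⬝ᵥ b - fderiv ℝ w x b ⬝ᵥ a := by
  have hdot (c h : Fin n → ℝ) : fderiv ℝ (fun y => w y ⬝ᵥ c) x h = fderiv ℝ w x h ⬝ᵥ c :=
    congrArg (· h) (((dotProductBilin ℝ ℝ).toContinuousBilinearMap.flip c).hasFDerivAt.comp x
      hw.hasFDerivAt).fderiv
  rw [extDeriv_apply (ω := fun y => dotForm (w y)) (dotForm.differentiableAt.comp x hw)]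
  simp [Fin.sum_univ_two, Fin.removeNth, hdot, sub_eq_add_neg]

noncomputable def covariantPiola (F u : (Fin 3 → ℝ) → Fin 3 → ℝ) (x : Fin 3 → ℝ) : Fin 3 → ℝ :=
  (jacobian3 F x)ᵀ *ᵥ u (F x)

lemma dotForm_covariantPiola (F u : (Fin 3 → ℝ) → Fin 3 → ℝ) (x : Fin 3 → ℝ) :
    dotForm (covariantPiola F u x) =
      (dotForm (u (F x))).compContinuousLinearMap (fderiv ℝ F x) := by
  ext m
  simp [covariantPiola, mulVec_transpose, ← dotProduct_mulVec, jacobian3_mulVec]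

section CovariantPiola

variable {F u : (Fin 3 → ℝ) → Fin 3 → ℝ} {x : Fin 3 → ℝ}

lemma differentiableAt_covariantPiola (hF : ContDiffAt ℝ 2 F x)
    (hu : DifferentiableAt ℝ u (F x)) : DifferentiableAt ℝ (covariantPiola F u) x := by
  have hDF : DifferentiableAt ℝ (fderiv ℝ F) x :=
    (hF.fderiv_right (m := 1) (by norm_num)).differentiableAt one_ne_zero
  have huF : DifferentiableAt ℝ (fun y => u (F y)) x :=
    hu.comp x (hF.differentiableAt two_ne_zero)
  refine differentiableAt_pi.2 fun i => ?_
  change DifferentiableAt ℝ (fun y => ∑ k, fderiv ℝ F y (Pi.single i 1) k * u (F y) k) x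
  exact DifferentiableAt.fun_sum fun k _ =>
    (differentiableAt_pi.1 (hDF.clm_apply (differentiableAt_const (Pi.single i 1))) k).mul
      (differentiableAt_pi.1 huF k)

lemma jacobian3_covariantPiola_sub_transpose (hF : ContDiffAt ℝ 2 F x)
    (hu : DifferentiableAt ℝ u (F x)) :
    jacobian3 (covariantPiola F u) x - (jacobian3 (covariantPiola F u) x)ᵀ =
      (jacobian3 F x)ᵀ * (jacobian3 u (F x) - (jacobian3 u (F x))ᵀ) * jacobian3 F x := by
  have hpull := extDeriv_pullback (ω := fun z => dotForm (u z))
    (dotForm.differentiableAt.comp (F x) hu) hF minSmoothness_of_isRCLikeNormedField.le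
  simp only [← dotForm_covariantPiola] at hpull
  have hcomp (a b : Fin 3 → ℝ) :
      ⇑(fderiv ℝ F x) ∘ ![a, b] = ![fderiv ℝ F x a, fderiv ℝ F x b] :=
    (FinVec.map_eq _ _).symm
  ext i j
  -- the `(i, j)` entry of either side is `d(F^* ω)(e_j, e_i) = dω(DF e_j, DF e_i)`
  have hij := congrArg (· ![Pi.single j 1, Pi.single i 1]) hpull
  simp only [compContinuousLinearMap_apply, hcomp,
    extDeriv_dotForm_comp_apply (differentiableAt_covariantPiola hF hu),
    extDeriv_dotForm_comp_apply hu, ← jacobian3_mulVec] at hij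
  simp only [dotProduct, mulVec, Pi.single_apply, mul_ite, mul_one, mul_zero,
    Finset.sum_ite_eq', Finset.mem_univ, ↓reduceIte, Fin.sum_univ_three, Matrix.sub_apply,
    transpose_apply, mul_apply, sub_self, zero_add, add_zero] at hij ⊢
  linarith

lemma jacobian3_mulVec_curl3_covariantPiola (hF : ContDiffAt ℝ 2 F x)
    (hu : DifferentiableAt ℝ u (F x)) :
    jacobian3 F x *ᵥ curl3 (covariantPiola F u) x = (jacobian3 F x).det • curl3 u (F x) := by
  have hskew : jacobian3 (covariantPiola F u) x - (jacobian3 (covariantPiola F u) x)ᵀ =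
      (jacobian3 F x)ᵀ * jacobian3 u (F x) * jacobian3 F x -
        ((jacobian3 F x)ᵀ * jacobian3 u (F x) * jacobian3 F x)ᵀ := by
    rw [jacobian3_covariantPiola_sub_transpose hF hu]
    simp [transpose_mul, Matrix.mul_sub, Matrix.sub_mul, Matrix.mul_assoc]
  rw [curl3_eq_skewAxial (differentiableAt_covariantPiola hF hu), skewAxial_congr hskew,
    mulVec_skewAxial_transpose_mul_mul, curl3_eq_skewAxial hu]

end CovariantPiola

/-- Transformation of the curl-curl form under the covariant Piola mapping in 3D:
∫_{F(Ω̂)} ⟨∇×u, ∇×v⟩ dx = ∫_{Ω̂} (1/det DF) ⟨DF ∇×û, DF ∇×v̂⟩ dx̂. -/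
theorem piola_curl_integral_transform_3d
    (Ω : Set (Fin 3 → ℝ)) (hΩ : MeasurableSet Ω)
    (F : (Fin 3 → ℝ) → (Fin 3 → ℝ)) (hF : ContDiff ℝ 2 F)
    (hinj : Set.InjOn F Ω)
    (hdet : ∀ x ∈ Ω, 0 < (jacobian3 F x).det)
    (u v : (Fin 3 → ℝ) → (Fin 3 → ℝ))
    (hu : ContDiff ℝ 1 u) (hv : ContDiff ℝ 1 v)
    (uhat vhat : (Fin 3 → ℝ) → (Fin 3 → ℝ))
    (huhat : ∀ x : Fin 3 → ℝ, uhat x = (jacobian3 F x).transpose.mulVec (u (F x)))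
    (hvhat : ∀ x : Fin 3 → ℝ, vhat x = (jacobian3 F x).transpose.mulVec (v (F x))) :
    ∫ x in F '' Ω, dotProduct (curl3 u x) (curl3 v x) =
      ∫ x in Ω, (1 / (jacobian3 F x).det) *
        dotProduct ((jacobian3 F x).mulVec (curl3 uhat x))
          ((jacobian3 F x).mulVec (curl3 vhat x)) := by
  obtain rfl : uhat = covariantPiola F u := funext huhat
  obtain rfl : vhat = covariantPiola F v := funext hvhat
  have hFderiv (x : Fin 3 → ℝ) : HasFDerivWithinAt F (fderiv ℝ F x) Ω x :=
    (hF.differentiable two_ne_zero x).hasFDerivAt.hasFDerivWithinAt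
  rw [integral_image_eq_integral_abs_det_fderiv_smul volume hΩ (fun x _ => hFderiv x) hinj]
  refine setIntegral_congr_fun hΩ fun x hx => ?_
  rw [jacobian3_mulVec_curl3_covariantPiola hF.contDiffAt (hu.differentiable one_ne_zero _),
    jacobian3_mulVec_curl3_covariantPiola hF.contDiffAt (hv.differentiable one_ne_zero _),
    smul_dotProduct, dotProduct_smul, ← det_jacobian3, abs_of_pos (hdet x hx)]
  simp only [smul_eq_mul]
  field_simp
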